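/- The edge relation on the projective Fraïssé limit of selections is transitive: Let A be a finite simplicial complex and let (f_n) be a generic sequence for the category S(A) of selections, with inverse limit profinite complex β^∞A. If x₀, x₁, x₂ are vertices of β^∞A with {x₀,x₁} and {x₁,x₂} faces of β^∞A, then {x₀,x₂} is a face of β^∞A. -/

import Mathlib

/-- An abstract simplicial complex: a family of finite nonempty sets closed under
taking nonempty subsets. -/
def IsComplex {V : Type*} (C : Set (Finset V)) : Prop :=
  (∀ σ ∈ C, σ.Nonempty) ∧ ∀ σ ∈ C, ∀ τ : Finset V, τ ⊆ σ → τ.Nonempty → τ ∈ C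

/-- The barycentric subdivision of `C`: vertices are the faces of `C`, and faces
are the nonempty finite chains of faces of `C` under inclusion. -/
def bary {V : Type*} (C : Set (Finset V)) : Set (Finset (Finset V)) :=
  { S | S.Nonempty ∧ (↑S : Set (Finset V)) ⊆ C ∧ IsChain (· ⊆ ·) (↑S : Set (Finset V)) }

/-- `f` is a simplicial map from `C` to `D`: the image of every face of `C` is a face of `D`. -/
def IsSimplicial {V W : Type*} [DecidableEq W]
    (C : Set (Finset V)) (D : Set (Finset W)) (f : V → W) : Prop :=
  ∀ σ ∈ C, σ.image f ∈ D


universe u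

/-- The vertex type of the `n`-fold iterated barycentric subdivision of a complex
on vertex type `V`. -/
def IterV (V : Type u) : ℕ → Type u
  | 0 => V
  | n + 1 => Finset (IterV V n)

instance iterVDecEq {V : Type u} [DecidableEq V] : ∀ n, DecidableEq (IterV V n)
  | 0 => inferInstanceAs (DecidableEq V)
  | n + 1 =>
    haveI := iterVDecEq (V := V) n
    inferInstanceAs (DecidableEq (Finset (IterV V n)))

/-- The `n`-fold iterated barycentric subdivision `β^n A`. -/
def iterBary {V : Type u} (A : Set (Finset V)) : (n : ℕ) → Set (Finset (IterV V n))
  | 0 => A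
  | n + 1 => bary (iterBary A n)

/-- The category `S(A)` of selections on `A`: the smallest family of simplicial maps among
iterated barycentric subdivisions `β^k A` containing all elementary selections
`β^{k+1}A → β^k A` and the identity `1_A`, closed under composition and under the
barycentric-subdivision operation `f ↦ βf`. -/
inductive Sel {V : Type u} [DecidableEq V] (A : Set (Finset V)) :
    (l k : ℕ) → (IterV V l → IterV V k) → Prop
  | elem (k : ℕ) (s : IterV V (k + 1) → IterV V k)
      (hs : ∀ σ ∈ iterBary A k, s σ ∈ σ) : Sel A (k + 1) k s
  | id : Sel A 0 0 (fun x => x)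
  | comp {l m k : ℕ} {f : IterV V m → IterV V k} {g : IterV V l → IterV V m} :
      Sel A m k f → Sel A l m g → Sel A l k (f ∘ g)
  | bary {l k : ℕ} {f : IterV V l → IterV V k} :
      Sel A l k f → Sel A (l + 1) (k + 1) (fun σ => Finset.image f σ)

/-- The composition `f_n ∘ ⋯ ∘ f_{n+m-1}` of a neat sequence of maps
(`chainComp k f n m : β^{k(n+m)}A → β^{k(n)}A`). -/
def chainComp {V : Type u} (k : ℕ → ℕ)
    (f : ∀ n, IterV V (k (n + 1)) → IterV V (k n)) :
    ∀ n m : ℕ, IterV V (k (n + m)) → IterV V (k n)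
  | _, 0 => fun x => x
  | n, m + 1 => fun x => chainComp k f n m (f (n + m) x)

/-! Fix a level `n` and let `s` be the elementary selection of `β^{k n}A` preferring `x₂ n`, then
`x₁ n`. Genericity factors the projection to level `n` as `s ∘ h` with `h` in `S(A)`. The points
`bᵢ = h (xᵢ (n + m))` are faces of `β^{k n}A` with `s bᵢ = xᵢ n`, and simpliciality of `h` makes
`{b₀, b₁}`, `{b₁, b₂}` chains. When the `xᵢ n` are distinct, `x₁ n ∈ b₁ \ b₀` and
`x₂ n ∈ b₂ \ b₁`, which forces `b₀ ⊆ b₁ ⊆ b₂`, so the face `b₂` contains both `x₀ n` and `x₂ n`. -/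

theorem isComplex_bary {V : Type*} (C : Set (Finset V)) : IsComplex (bary C) :=
  ⟨fun _ hσ => hσ.1, fun _ ⟨_, hsub, hch⟩ _ hτ hτne =>
    ⟨hτne, (Finset.coe_subset.mpr hτ).trans hsub, hch.mono (Finset.coe_subset.mpr hτ)⟩⟩

theorem isComplex_iterBary {V : Type u} {A : Set (Finset V)} (hA : IsComplex A) :
    ∀ n, IsComplex (iterBary A n)
  | 0 => hA
  | n + 1 => isComplex_bary (iterBary A n)

theorem IsComplex.pair_mem_of_mem_of_mem {W : Type*} [DecidableEq W] {C : Set (Finset W)}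
    (hC : IsComplex C) {σ : Finset W} (hσ : σ ∈ C) {a b : W} (ha : a ∈ σ) (hb : b ∈ σ) :
    ({a, b} : Finset W) ∈ C :=
  hC.2 σ hσ _ (Finset.insert_subset ha (Finset.singleton_subset_iff.mpr hb)) ⟨a, by simp⟩

theorem IsChain.exists_forall_subset {α : Type*} {S : Finset (Finset α)} (hS : S.Nonempty)
    (hch : IsChain (· ⊆ ·) (↑S : Set (Finset α))) : ∃ τ ∈ S, ∀ σ ∈ S, σ ⊆ τ := by
  obtain ⟨τ, hτ, hmax⟩ := S.exists_maximal hS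
  refine ⟨τ, hτ, fun σ hσ => ?_⟩
  rcases eq_or_ne σ τ with rfl | hne
  · exact subset_rfl
  · exact (hch hσ hτ hne).elim id (hmax hσ)

/-- A selection keeps a face of `β C` inside its largest member. -/
theorem isSimplicial_of_forall_mem {W : Type*} [DecidableEq W] {C : Set (Finset W)}
    (hC : IsComplex C) {s : Finset W → W} (hs : ∀ σ ∈ C, s σ ∈ σ) :
    IsSimplicial (bary C) C s := by
  rintro S ⟨hne, hsub, hch⟩
  obtain ⟨τ, hτS, hτmax⟩ := hch.exists_forall_subset hne
  refine hC.2 τ (hsub hτS) _ ?_ (hne.image s)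
  intro x hx
  obtain ⟨ρ, hρ, rfl⟩ := Finset.mem_image.mp hx
  exact hτmax ρ hρ (hs ρ (hsub hρ))

theorem isSimplicial_bary_image {V W : Type*} [DecidableEq W] {C : Set (Finset V)}
    {D : Set (Finset W)} {g : V → W} (hg : IsSimplicial C D g) :
    IsSimplicial (bary C) (bary D) (Finset.image g) := by
  rintro S ⟨hne, hsub, hch⟩
  refine ⟨hne.image _, ?_, ?_⟩
  · intro x hx
    obtain ⟨τ, hτ, rfl⟩ := Finset.mem_image.mp (Finset.mem_coe.mp hx)
    exact hg τ (hsub hτ)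
  · rw [Finset.coe_image]
    exact hch.image_of_map_rel _ _ _ fun _ _ h => Finset.image_subset_image h

theorem IsSimplicial.comp {U V W : Type*} [DecidableEq V] [DecidableEq W]
    {B : Set (Finset U)} {C : Set (Finset V)} {D : Set (Finset W)} {f : V → W} {g : U → V}
    (hf : IsSimplicial C D f) (hg : IsSimplicial B C g) : IsSimplicial B D (f ∘ g) := by
  intro σ hσ
  rw [← Finset.image_image]
  exact hf _ (hg σ hσ)

theorem IsSimplicial.pair_mem {V W : Type*} [DecidableEq V] [DecidableEq W]
    {C : Set (Finset V)} {D : Set (Finset W)} {g : V → W} (hg : IsSimplicial C D g)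
    {x y : V} (hxy : ({x, y} : Finset V) ∈ C) : ({g x, g y} : Finset W) ∈ D := by
  simpa using hg _ hxy

theorem Sel.isSimplicial {V : Type u} [DecidableEq V] {A : Set (Finset V)} (hA : IsComplex A)
    {l j : ℕ} {g : IterV V l → IterV V j} (hg : Sel A l j g) :
    IsSimplicial (iterBary A l) (iterBary A j) g := by
  induction hg with
  | elem k s hs => exact isSimplicial_of_forall_mem (isComplex_iterBary hA k) hs
  | id => intro σ hσ; simpa using hσ
  | comp _ _ ihf ihg => exact ihf.comp ihg
  | bary _ ih => exact isSimplicial_bary_image ih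

theorem chainComp_apply_of_thread {V : Type u} {k : ℕ → ℕ}
    {f : ∀ n, IterV V (k (n + 1)) → IterV V (k n)}
    {x : ∀ n, IterV V (k n)} (hx : ∀ n, f n (x (n + 1)) = x n) (n : ℕ) :
    ∀ m, chainComp k f n m (x (n + m)) = x n
  | 0 => rfl
  | m + 1 => by
    change chainComp k f n m (f (n + m) (x (n + m + 1))) = x n
    rw [hx, chainComp_apply_of_thread hx n m]

section PreferSelect

variable {W : Type*} [DecidableEq W]

/-- On faces containing neither `a₁` nor `a₂` the value is arbitrary. -/
noncomputable def preferSelect (a₁ a₂ : W) (σ : Finset W) : W :=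
  if a₂ ∈ σ then a₂ else if a₁ ∈ σ then a₁ else if h : σ.Nonempty then h.choose else a₂

variable {a₁ a₂ : W} {σ : Finset W}

theorem preferSelect_mem (hσ : σ.Nonempty) : preferSelect a₁ a₂ σ ∈ σ := by
  unfold preferSelect
  split_ifs with h₂ h₁
  exacts [h₂, h₁, hσ.choose_spec]

theorem notMem_of_preferSelect_ne_right (h : preferSelect a₁ a₂ σ ≠ a₂) : a₂ ∉ σ :=
  fun h₂ => h (if_pos h₂)

theorem notMem_of_preferSelect_ne (h₁ : preferSelect a₁ a₂ σ ≠ a₁)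
    (h₂ : preferSelect a₁ a₂ σ ≠ a₂) : a₁ ∉ σ := fun hmem => by
  rw [preferSelect, if_neg (notMem_of_preferSelect_ne_right h₂), if_pos hmem] at h₁
  exact h₁ rfl

end PreferSelect

theorem subset_of_pair_mem_bary {W : Type*} [DecidableEq W] {C : Set (Finset W)} {b b' : Finset W}
    (h : ({b, b'} : Finset (Finset W)) ∈ bary C) {a : W} (ha : a ∉ b) (ha' : a ∈ b') :
    b ⊆ b' := by
  rcases eq_or_ne b b' with rfl | hne
  · exact subset_rfl
  · exact (h.2.2 (by simp) (by simp) hne).resolve_right fun hsub => ha (hsub ha')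

theorem pair_mem_of_preferSelect {W : Type*} [DecidableEq W] {C : Set (Finset W)}
    (hC : IsComplex C) {a₀ a₁ a₂ : W}
    (h01 : ({a₀, a₁} : Finset W) ∈ C) (h12 : ({a₁, a₂} : Finset W) ∈ C)
    {b₀ b₁ b₂ : Finset W} (hb₀ : preferSelect a₁ a₂ b₀ = a₀)
    (hb₁ : preferSelect a₁ a₂ b₁ = a₁) (hb₂ : preferSelect a₁ a₂ b₂ = a₂)
    (hb01 : ({b₀, b₁} : Finset (Finset W)) ∈ bary C)
    (hb12 : ({b₁, b₂} : Finset (Finset W)) ∈ bary C) :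
    ({a₀, a₂} : Finset W) ∈ C := by
  rcases eq_or_ne a₀ a₁ with rfl | h01ne
  · exact h12
  rcases eq_or_ne a₁ a₂ with rfl | h12ne
  · exact h01
  have mem_of_eq {b : Finset W} (hb : b ∈ C) {a : W} (h : preferSelect a₁ a₂ b = a) : a ∈ b :=
    h ▸ preferSelect_mem (hC.1 b hb)
  have hb₁C : b₁ ∈ C := hb12.2.1 (by simp)
  have hb₂C : b₂ ∈ C := hb12.2.1 (by simp)
  have ha₂ : a₂ ∈ b₂ := mem_of_eq hb₂C hb₂
  have ha₀ : a₀ ∈ b₂ := by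
    rcases eq_or_ne a₀ a₂ with rfl | h02ne
    · exact ha₂
    have hb₀₁ : b₀ ⊆ b₁ := subset_of_pair_mem_bary hb01
      (notMem_of_preferSelect_ne (hb₀ ▸ h01ne) (hb₀ ▸ h02ne)) (mem_of_eq hb₁C hb₁)
    have hb₁₂ : b₁ ⊆ b₂ := subset_of_pair_mem_bary hb12
      (notMem_of_preferSelect_ne_right (hb₁ ▸ h12ne)) ha₂
    exact hb₁₂ (hb₀₁ (mem_of_eq (hb01.2.1 (by simp)) hb₀))
  exact hC.pair_mem_of_mem_of_mem hb₂C ha₀ ha₂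

theorem limit_edge_relation_transitive_general {V : Type u} [DecidableEq V] {A : Set (Finset V)}
    (hA : IsComplex A)
    (k : ℕ → ℕ) (f : ∀ n, IterV V (k (n + 1)) → IterV V (k n))
    (hext : ∀ (n l : ℕ) (g : IterV V l → IterV V (k n)), Sel A l (k n) g →
      ∃ (m : ℕ) (h : IterV V (k (n + m)) → IterV V l), 0 < m ∧
        Sel A (k (n + m)) l h ∧ chainComp k f n m = g ∘ h)
    (x₀ x₁ x₂ : ∀ n, IterV V (k n))
    (hth₀ : ∀ n, f n (x₀ (n + 1)) = x₀ n)
    (hth₁ : ∀ n, f n (x₁ (n + 1)) = x₁ n)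
    (hth₂ : ∀ n, f n (x₂ (n + 1)) = x₂ n)
    (h01 : ∀ n, ({x₀ n, x₁ n} : Finset (IterV V (k n))) ∈ iterBary A (k n))
    (h12 : ∀ n, ({x₁ n, x₂ n} : Finset (IterV V (k n))) ∈ iterBary A (k n)) :
    ∀ n, ({x₀ n, x₂ n} : Finset (IterV V (k n))) ∈ iterBary A (k n) := by
  intro n
  set s := preferSelect (x₁ n) (x₂ n)
  have hs : Sel A (k n + 1) (k n) s :=
    Sel.elem (k n) s fun σ hσ => preferSelect_mem ((isComplex_iterBary hA (k n)).1 σ hσ)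
  obtain ⟨m, h, -, hh, hcomp⟩ := hext n (k n + 1) s hs
  have hsel {x : ∀ n, IterV V (k n)} (hx : ∀ n, f n (x (n + 1)) = x n) :
      s (h (x (n + m))) = x n :=
    (congrFun hcomp _).symm.trans (chainComp_apply_of_thread hx n m)
  exact pair_mem_of_preferSelect (isComplex_iterBary hA (k n)) (h01 n) (h12 n)
    (hsel hth₀) (hsel hth₁) (hsel hth₂)
    ((hh.isSimplicial hA).pair_mem (h01 (n + m))) ((hh.isSimplicial hA).pair_mem (h12 (n + m)))

/-- The edge relation on the projective Fraïssé limit of selections is transitive: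
for a generic sequence `(f_n)` for `S(A)` with inverse limit `β^∞A`, if `x₀, x₁, x₂` are
vertices of `β^∞A` such that `{x₀,x₁}` and `{x₁,x₂}` are faces of `β^∞A`, then `{x₀,x₂}`
is a face of `β^∞A`. Vertices are threads through the sequence; a finite set of threads is
a face iff each of its projections is a face. -/
theorem limit_edge_relation_transitive {V : Type u} [DecidableEq V] {A : Set (Finset V)}
    (hA : IsComplex A) (hfin : A.Finite)
    (k : ℕ → ℕ) (f : ∀ n, IterV V (k (n + 1)) → IterV V (k n))
    (hSel : ∀ n, Sel A (k (n + 1)) (k n) (f n))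
    (huniv : ∀ j : ℕ, ∃ (n : ℕ) (g : IterV V (k (n + 1)) → IterV V j),
      Sel A (k (n + 1)) j g)
    (hext : ∀ (n l : ℕ) (g : IterV V l → IterV V (k n)), Sel A l (k n) g →
      ∃ (m : ℕ) (h : IterV V (k (n + m)) → IterV V l), 0 < m ∧
        Sel A (k (n + m)) l h ∧ chainComp k f n m = g ∘ h)
    (x₀ x₁ x₂ : ∀ n, IterV V (k n))
    (hth₀ : ∀ n, f n (x₀ (n + 1)) = x₀ n)
    (hth₁ : ∀ n, f n (x₁ (n + 1)) = x₁ n)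
    (hth₂ : ∀ n, f n (x₂ (n + 1)) = x₂ n)
    (hd₀ : ∀ n, ∃ σ ∈ iterBary A (k n), x₀ n ∈ σ)
    (hd₁ : ∀ n, ∃ σ ∈ iterBary A (k n), x₁ n ∈ σ)
    (hd₂ : ∀ n, ∃ σ ∈ iterBary A (k n), x₂ n ∈ σ)
    (h01 : ∀ n, ({x₀ n, x₁ n} : Finset (IterV V (k n))) ∈ iterBary A (k n))
    (h12 : ∀ n, ({x₁ n, x₂ n} : Finset (IterV V (k n))) ∈ iterBary A (k n)) :
    ∀ n, ({x₀ n, x₂ n} : Finset (IterV V (k n))) ∈ iterBary A (k n) :=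
  limit_edge_relation_transitive_general hA k f hext x₀ x₁ x₂ hth₀ hth₁ hth₂ h01 h12
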